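/- arXiv:2301.09354 — 2 statements merged into one kernel-verified Lean document; each statement's English description precedes it below -/
import Mathlib

section
/- Let c, f, w, F be real numbers with 833f² − 32c ≠ 0 and 32c − 105f² ≠ 0. Assume: (i) 9604·(32c − 105f²)·w = (147f² − 4c)·(128c − 245f²)·(32c − 833f²); (ii) −20580·f·w + 196·(32c − 105f²)·F = 3f·(128c − 245f²)·(32c − 833f²) − 5f·(147f² − 4c)·(32c − 833f²) − 17f·(147f² − 4c)·(128c − 245f²); (iii) F = (1911f/(833f² − 32c))·w + (1/14)·(245f² − 2c)·f. Then 14386462720·c⁴·f − 356598824960·c³·f³ − 2331746708480·c²·f⁵ + 42758681977200·c·f⁷ + 151265495839500·f⁹ = 0. -/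
theorem stmt_9_general (c f w F : ℝ) (h1 : 833 * f ^ 2 - 32 * c ≠ 0)
    (hi : 9604 * (32 * c - 105 * f ^ 2) * w =
      (147 * f ^ 2 - 4 * c) * (128 * c - 245 * f ^ 2) * (32 * c - 833 * f ^ 2))
    (hii : -20580 * f * w + 196 * (32 * c - 105 * f ^ 2) * F =
      3 * f * (128 * c - 245 * f ^ 2) * (32 * c - 833 * f ^ 2) -
        5 * f * (147 * f ^ 2 - 4 * c) * (32 * c - 833 * f ^ 2) -
        17 * f * (147 * f ^ 2 - 4 * c) * (128 * c - 245 * f ^ 2))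
    (hiii : F = (1911 * f / (833 * f ^ 2 - 32 * c)) * w +
      (1 / 14) * (245 * f ^ 2 - 2 * c) * f) :
    14386462720 * c ^ 4 * f - 356598824960 * c ^ 3 * f ^ 3 -
        2331746708480 * c ^ 2 * f ^ 5 + 42758681977200 * c * f ^ 7 +
        151265495839500 * f ^ 9 = 0 := by
  have hiii_cleared : F * (833 * f ^ 2 - 32 * c) =
      1911 * f * w + (1 / 14) * (245 * f ^ 2 - 2 * c) * f * (833 * f ^ 2 - 32 * c) := by
    rw [hiii, add_mul, div_mul_eq_mul_div, div_mul_cancel₀ _ h1]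
  -- Scale the cleared (iii) by `9604 * 196 * (32c - 105f²)²`, then eliminate
  -- `196 * (32c - 105f²) * F` with (ii) and `9604 * (32c - 105f²) * w` with (i).
  linear_combination (-(12644352 * c * f - 56471520 * f ^ 3)) * hi +
    (9604 * (32 * c - 105 * f ^ 2) * (833 * f ^ 2 - 32 * c)) * hii +
    (-9604 * 196 * (32 * c - 105 * f ^ 2) ^ 2) * hiii_cleared

/-- Eliminating `w = (f')²` and `F = f''` from the Gauss relation (4.31), its
derivative (4.32) and the normal part of the biharmonic equation (4.33) yields a
non-trivial degree-9 polynomial equation in `f`. -/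
theorem stmt_9 (c f w F : ℝ) (h1 : 833 * f ^ 2 - 32 * c ≠ 0)
    (h2 : 32 * c - 105 * f ^ 2 ≠ 0)
    (hi : 9604 * (32 * c - 105 * f ^ 2) * w =
      (147 * f ^ 2 - 4 * c) * (128 * c - 245 * f ^ 2) * (32 * c - 833 * f ^ 2))
    (hii : -20580 * f * w + 196 * (32 * c - 105 * f ^ 2) * F =
      3 * f * (128 * c - 245 * f ^ 2) * (32 * c - 833 * f ^ 2) -
        5 * f * (147 * f ^ 2 - 4 * c) * (32 * c - 833 * f ^ 2) -
        17 * f * (147 * f ^ 2 - 4 * c) * (128 * c - 245 * f ^ 2))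
    (hiii : F = (1911 * f / (833 * f ^ 2 - 32 * c)) * w +
      (1 / 14) * (245 * f ^ 2 - 2 * c) * f) :
    14386462720 * c ^ 4 * f - 356598824960 * c ^ 3 * f ^ 3 -
        2331746708480 * c ^ 2 * f ^ 5 + 42758681977200 * c * f ^ 7 +
        151265495839500 * f ^ 9 = 0 :=
  stmt_9_general c f w F h1 hi hii hiii
end

section
/- Let m, r, c, f, k, Ω, Θ, E be real numbers with m ≠ 0 and m − r ≠ 0, and set k₃ = (3m/(2(m−r)))·f − ((r−1)/(m−r))·k. Assume: (i) Ω·Θ = −c − k·k₃; (ii) E = (−((r−1)/3)·f − (2(r−1)/(3m))·k)·Ω + (−((m−r+3)/3)·f + (2(r−1)/(3m))·k)·Θ; (iii) ((4−r)·Ω + (r−m+3)·Θ)·E + (3m²(m−r+6)/(4(m−r)))·f³ − (3m(m+4r−2)/(2(m−r)))·f²·k + (3m(r−1)/(m−r))·f·k² − 3(m+1)·c·f = 0. Then (r−1)(4−r)(mf+2k)·Ω² + (r−m+3)(m(m−r+3)f − 2(r−1)k)·Θ² = (9m³(m−r+6)/(4(m−r)))·f³ + (3m²(r−1)(2r−2m−15)/(2(m−r)))·f²·k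 + (m(r−1)(m+11r−12+2mr−2r²)/(m−r))·f·k² + (2(r−1)²(m−2r+1)/(m−r))·k³ − m(2mr+4m−2r²+5r)·c·f − 2(r−1)(m−2r+1)·c·k. -/
/-! Multiplying (iii) by `-3m` and clearing the denominator `3m` of (ii) turns `L * E`, with
`L = (4 - r) Ω + (r - m + 3) Θ`, into a quadratic form in `Ω, Θ`; its mixed term `Ω Θ` is then
replaced using the Gauss relation (i). -/

theorem stmt_13_general (m r c f k Ω Θ E : ℝ) (hm : m ≠ 0)
    (k₃ : ℝ) (hk₃ : k₃ = (3 * m / (2 * (m - r))) * f - ((r - 1) / (m - r)) * k)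
    (hi : Ω * Θ = -c - k * k₃)
    (hii : E = (-((r - 1) / 3) * f - (2 * (r - 1) / (3 * m)) * k) * Ω +
      (-((m - r + 3) / 3) * f + (2 * (r - 1) / (3 * m)) * k) * Θ)
    (hiii : ((4 - r) * Ω + (r - m + 3) * Θ) * E +
        (3 * m ^ 2 * (m - r + 6) / (4 * (m - r))) * f ^ 3 -
        (3 * m * (m + 4 * r - 2) / (2 * (m - r))) * f ^ 2 * k +
        (3 * m * (r - 1) / (m - r)) * f * k ^ 2 - 3 * (m + 1) * c * f = 0) :
    (r - 1) * (4 - r) * (m * f + 2 * k) * Ω ^ 2 +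
        (r - m + 3) * (m * (m - r + 3) * f - 2 * (r - 1) * k) * Θ ^ 2 =
      (9 * m ^ 3 * (m - r + 6) / (4 * (m - r))) * f ^ 3 +
        (3 * m ^ 2 * (r - 1) * (2 * r - 2 * m - 15) / (2 * (m - r))) * f ^ 2 * k +
        (m * (r - 1) * (m + 11 * r - 12 + 2 * m * r - 2 * r ^ 2) / (m - r)) *
          f * k ^ 2 +
        (2 * (r - 1) ^ 2 * (m - 2 * r + 1) / (m - r)) * k ^ 3 -
        m * (2 * m * r + 4 * m - 2 * r ^ 2 + 5 * r) * c * f -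
        2 * (r - 1) * (m - 2 * r + 1) * c * k := by
  have hE : 3 * m * E =
      -((r - 1) * (m * f + 2 * k) * Ω + (m * (m - r + 3) * f - 2 * (r - 1) * k) * Θ) := by
    rw [hii]
    field_simp
    ring
  subst hk₃
  -- with `(2 * (m - r))⁻¹ = 2⁻¹ * (m - r)⁻¹`, the only denominator left is the atom `(m - r)⁻¹`
  simp only [div_eq_mul_inv, mul_inv] at hi hiii ⊢
  linear_combination (-3 * m) * hiii + ((4 - r) * Ω + (r - m + 3) * Θ) * hE -
    ((4 - r) * (m * (m - r + 3) * f - 2 * (r - 1) * k) +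
      (r - m + 3) * (r - 1) * (m * f + 2 * k)) * hi

/-- Algebraic content of the first relation (3.47) of Lemma PropertiesOmegaTheta:
substituting (ii) into (iii) and eliminating `ΩΘ` via (i) yields the conclusion. -/
theorem stmt_13 (m r c f k Ω Θ E : ℝ) (hm : m ≠ 0) (hmr : m - r ≠ 0)
    (k₃ : ℝ) (hk₃ : k₃ = (3 * m / (2 * (m - r))) * f - ((r - 1) / (m - r)) * k)
    (hi : Ω * Θ = -c - k * k₃)
    (hii : E = (-((r - 1) / 3) * f - (2 * (r - 1) / (3 * m)) * k) * Ω +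
      (-((m - r + 3) / 3) * f + (2 * (r - 1) / (3 * m)) * k) * Θ)
    (hiii : ((4 - r) * Ω + (r - m + 3) * Θ) * E +
        (3 * m ^ 2 * (m - r + 6) / (4 * (m - r))) * f ^ 3 -
        (3 * m * (m + 4 * r - 2) / (2 * (m - r))) * f ^ 2 * k +
        (3 * m * (r - 1) / (m - r)) * f * k ^ 2 - 3 * (m + 1) * c * f = 0) :
    (r - 1) * (4 - r) * (m * f + 2 * k) * Ω ^ 2 +
        (r - m + 3) * (m * (m - r + 3) * f - 2 * (r - 1) * k) * Θ ^ 2 =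
      (9 * m ^ 3 * (m - r + 6) / (4 * (m - r))) * f ^ 3 +
        (3 * m ^ 2 * (r - 1) * (2 * r - 2 * m - 15) / (2 * (m - r))) * f ^ 2 * k +
        (m * (r - 1) * (m + 11 * r - 12 + 2 * m * r - 2 * r ^ 2) / (m - r)) *
          f * k ^ 2 +
        (2 * (r - 1) ^ 2 * (m - 2 * r + 1) / (m - r)) * k ^ 3 -
        m * (2 * m * r + 4 * m - 2 * r ^ 2 + 5 * r) * c * f -
        2 * (r - 1) * (m - 2 * r + 1) * c * k :=
  stmt_13_general m r c f k Ω Θ E hm k₃ hk₃ hi hii hiii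
end
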